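/- Let 0 < ε < 1 and let (x_n) be a sequence of positive reals with lim_{n→∞} n·x_n = 1 − ε. Then for the complete graphs K_n, lim_{n→∞} L(x_n, K_n) = (1−ε)/ε and lim_{n→∞} I(x_n, K_n) = 1. -/

import Mathlib

open Filter Topology

/-- A self-avoiding walk from `o` in the graph `G`, encoded as the (nonempty) list of
visited vertices: it starts at `o`, consecutive vertices are adjacent, and no vertex is
visited more than once.  A list of length `k+1` corresponds to a walk with `k` edges. -/
def IsSAWFrom {V : Type*} (G : SimpleGraph V) (o : V) (l : List V) : Prop :=
  l.head? = some o ∧ l.Chain' G.Adj ∧ l.Nodup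

/-- `sawCount G o k = |SAW_k(o,G)|`, the number of self-avoiding walks from `o` with
exactly `k` edges. -/
noncomputable def sawCount {V : Type*} (G : SimpleGraph V) (o : V) (k : ℕ) : ℕ :=
  Nat.card {l : List V // IsSAWFrom G o l ∧ l.length = k + 1}

/-- The partition function `Z_{o,G}(x) = Σ_k |SAW_k(o,G)| x^k`.  Since a self-avoiding
walk in a graph on `|V|` vertices has at most `|V| - 1` edges, the sum over
`k < |V|` captures all nonzero terms. -/
noncomputable def sawZ {V : Type*} [Fintype V] (G : SimpleGraph V) (o : V) (x : ℝ) : ℝ :=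
  ∑ k ∈ Finset.range (Fintype.card V), (sawCount G o k : ℝ) * x ^ k

/-- The expected length `L(x,o,G) = Z_{o,G}(x)⁻¹ Σ_k k |SAW_k(o,G)| x^k`. -/
noncomputable def sawL {V : Type*} [Fintype V] (G : SimpleGraph V) (o : V) (x : ℝ) : ℝ :=
  (sawZ G o x)⁻¹ *
    ∑ k ∈ Finset.range (Fintype.card V), (k : ℝ) * (sawCount G o k : ℝ) * x ^ k

/-- The number of pairs `(ω, ω')` of self-avoiding walks from `o`, with `k` resp. `j`
edges, whose vertex sets intersect exactly in `{o}`. -/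
noncomputable def sawPairCount {V : Type*} (G : SimpleGraph V) (o : V) (k j : ℕ) : ℕ :=
  Nat.card {p : List V × List V //
    (IsSAWFrom G o p.1 ∧ p.1.length = k + 1) ∧
    (IsSAWFrom G o p.2 ∧ p.2.length = j + 1) ∧
    {v | v ∈ p.1 ∧ v ∈ p.2} = {o}}

/-- The trivial-intersection probability
`I(x,o,G) = Z_{o,G}(x)⁻² Σ x^{|ω|+|ω'|}`, summed over pairs of self-avoiding walks
from `o` whose vertex sets meet only in `o`. -/
noncomputable def sawI {V : Type*} [Fintype V] (G : SimpleGraph V) (o : V) (x : ℝ) : ℝ :=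
  ((sawZ G o x) ^ 2)⁻¹ *
    ∑ k ∈ Finset.range (Fintype.card V), ∑ j ∈ Finset.range (Fintype.card V),
      (sawPairCount G o k j : ℝ) * x ^ (k + j)

/-- The finite-graph critical exponent `γ(x,o,G) = log Z_{o,G}(x) / log (L(x,o,G) + 1)`. -/
noncomputable def sawGamma {V : Type*} [Fintype V] (G : SimpleGraph V) (o : V) (x : ℝ) : ℝ :=
  Real.log (sawZ G o x) / Real.log (sawL G o x + 1)

/-- A graph is vertex-transitive if its automorphism group acts transitively on vertices. -/
def SimpleGraph.VertexTransitive {V : Type*} (G : SimpleGraph V) : Prop :=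
  ∀ u v : V, ∃ φ : G ≃g G, φ u = v

/-- A graph is `d`-regular: every vertex has exactly `d` neighbours. -/
def SawRegular {V : Type*} (G : SimpleGraph V) (d : ℕ) : Prop :=
  ∀ v : V, Nat.card (G.neighborSet v) = d

/-- `(x n)` is super-critical for the rooted family `(G n, o n)`:
`liminf_n Z_{o_n, G_n}(x_n) = ∞`, i.e. `Z` tends to infinity. -/
def SawSuperCritical {V : ℕ → Type*} [∀ n, Fintype (V n)]
    (G : ∀ n, SimpleGraph (V n)) (o : ∀ n, V n) (x : ℕ → ℝ) : Prop :=
  Tendsto (fun n => sawZ (G n) (o n) (x n)) atTop atTop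

/-- `(x n)` is sub-critical for the rooted family `(G n, o n)`:
`limsup_n Z_{o_n, G_n}(x_n) < ∞`, i.e. the sequence of partition functions is bounded. -/
def SawSubCritical {V : ℕ → Type*} [∀ n, Fintype (V n)]
    (G : ∀ n, SimpleGraph (V n)) (o : ∀ n, V n) (x : ℕ → ℝ) : Prop :=
  BddAbove (Set.range fun n => sawZ (G n) (o n) (x n))

/-- `(x n)` is critical: for every `0 < ε < 1`, `(x n (1+ε))` is super-critical and
`(x n (1-ε))` is sub-critical. -/
def SawCritical {V : ℕ → Type*} [∀ n, Fintype (V n)]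
    (G : ∀ n, SimpleGraph (V n)) (o : ∀ n, V n) (x : ℕ → ℝ) : Prop :=
  ∀ ε : ℝ, 0 < ε → ε < 1 →
    SawSuperCritical G o (fun n => x n * (1 + ε)) ∧
    SawSubCritical G o (fun n => x n * (1 - ε))

/-- `Z_{K_n}(x)` for the complete graph `K_n` on `n` vertices, rooted at an arbitrary
vertex (all choices agree by symmetry); junk value `0` for `n = 0`. -/
noncomputable def completeZ (n : ℕ) (x : ℝ) : ℝ :=
  if h : 0 < n then sawZ (⊤ : SimpleGraph (Fin n)) ⟨0, h⟩ x else 0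

/-- `L(x, K_n)` for the complete graph `K_n`; junk value `0` for `n = 0`. -/
noncomputable def completeL (n : ℕ) (x : ℝ) : ℝ :=
  if h : 0 < n then sawL (⊤ : SimpleGraph (Fin n)) ⟨0, h⟩ x else 0

/-- `I(x, K_n)` for the complete graph `K_n`; junk value `0` for `n = 0`. -/
noncomputable def completeI (n : ℕ) (x : ℝ) : ℝ :=
  if h : 0 < n then sawI (⊤ : SimpleGraph (Fin n)) ⟨0, h⟩ x else 0

/-- `γ(x, K_n)` for the complete graph `K_n`; junk value `0` for `n = 0`. -/
noncomputable def completeGamma (n : ℕ) (x : ℝ) : ℝ :=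
  if h : 0 < n then sawGamma (⊤ : SimpleGraph (Fin n)) ⟨0, h⟩ x else 0

/-- A non-backtracking walk in `G`, encoded as the list of visited vertices:
consecutive vertices are adjacent and `ω_{j+2} ≠ ω_j` for all `j`. -/
def IsNBWalk {V : Type*} (G : SimpleGraph V) (l : List V) : Prop :=
  l.Chain' G.Adj ∧ ∀ i, i + 2 < l.length → l[i]? ≠ l[i + 2]?

/-- The number of non-backtracking walks of length `t` from `u` to `v`. -/
noncomputable def nbCount {V : Type*} (G : SimpleGraph V) (u v : V) (t : ℕ) : ℕ :=
  Nat.card {l : List V //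
    IsNBWalk G l ∧ l.length = t + 1 ∧ l.head? = some u ∧ l.getLast? = some v}

/-- `p_t(u,v)`: the number of non-backtracking walks of length `t` from `u` to `v`
divided by `d(d-1)^{t-1}`, i.e. the probability that the non-backtracking random walk
on a `d`-regular graph started at `u` is at `v` at time `t`. -/
noncomputable def nbProb {V : Type*} (G : SimpleGraph V) (d : ℕ) (u v : V) (t : ℕ) : ℝ :=
  (nbCount G u v t : ℝ) / (d * ((d : ℝ) - 1) ^ (t - 1))

/-- The mixing time of the non-backtracking random walk on the `d`-regular graph `G`
with `N` vertices: the least `t ≥ 1` with `|p_t(u,v) - 1/N| ≤ 1/(2N)` for all `u, v`. -/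
noncomputable def nbMixingTime {V : Type*} [Fintype V] (G : SimpleGraph V) (d : ℕ) : ℕ :=
  sInf {t : ℕ | 1 ≤ t ∧ ∀ u v : V,
    |nbProb G d u v t - 1 / (Fintype.card V : ℝ)| ≤ 1 / (2 * (Fintype.card V : ℝ))}

/-!
In `K_n` a self-avoiding walk from `o` with `k` edges is an injective `k`-tuple of the other
`n - 1` vertices, so there are `(n-1)_k = (n-1)(n-2)⋯(n-k)` of them; and two such walks meeting
only at `o` concatenate to an injective `(k+j)`-tuple, so such pairs number `(n-1)_{k+j}`.
Hence `Z`, the numerator of `L` and the numerator of `I` are power series in `x_n` with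
coefficients built from `(n-1)_k x_n^k`. Since `(n-1)_k x_n^k → (1-ε)^k` termwise and is
dominated by `c^k` for any `c ∈ (1-ε, 1)`, dominated convergence gives `Z → 1/ε`,
`∑ k (n-1)_k x_n^k → (1-ε)/ε²` and `∑_{k,j} (n-1)_{k+j} x_n^{k+j} → 1/ε²`.
-/

def nodupListEquivEmbedding (α : Type*) (k : ℕ) :
    {l : List α // l.Nodup ∧ l.length = k} ≃ (Fin k ↪ α) where
  toFun l := ⟨l.1.get ∘ Fin.cast l.2.2.symm,
    (List.nodup_iff_injective_get.mp l.2.1).comp (Fin.cast_injective _)⟩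
  invFun f := ⟨List.ofFn f, List.nodup_ofFn.mpr f.injective, List.length_ofFn⟩
  left_inv l := Subtype.ext <| List.ext_get (by simp [l.2.2]) fun _ _ _ => by simp
  right_inv f := by ext; simp

lemma mem_range_nodupListEquivEmbedding {α : Type*} {k : ℕ}
    (l : {l : List α // l.Nodup ∧ l.length = k}) (v : α) :
    v ∈ Set.range (nodupListEquivEmbedding α k l) ↔ v ∈ l.1 := by
  rw [List.mem_iff_get]
  exact ⟨fun ⟨i, hi⟩ => ⟨_, hi⟩, fun ⟨i, hi⟩ => ⟨i.cast l.2.2, hi⟩⟩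

section CompleteGraphCounting

variable {α : Type*}

lemma IsSAWFrom.head_mem {G : SimpleGraph α} {o : α} {l : List α} (h : IsSAWFrom G o l) :
    o ∈ l :=
  List.mem_of_mem_head? h.1

lemma isSAWFrom_top_iff {o : α} {l : List α} :
    IsSAWFrom ⊤ o l ↔ l.head? = some o ∧ l.Nodup :=
  ⟨fun h => ⟨h.1, h.2.2⟩, fun h => ⟨h.1, h.2.isChain.imp fun _ _ => id, h.2⟩⟩

def sawTopEquivTail (o : α) (k : ℕ) :
    {l : List α // IsSAWFrom ⊤ o l ∧ l.length = k + 1} ≃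
      {t : {l : List α // l.Nodup ∧ l.length = k} // o ∉ t.1} where
  toFun l := by
    have hl : l.1 = o :: l.1.tail := List.eq_cons_of_mem_head? l.2.1.1
    have hnd := l.2.1.2.2
    rw [hl, List.nodup_cons] at hnd
    exact ⟨⟨l.1.tail, hnd.2, by simp [l.2.2]⟩, hnd.1⟩
  invFun t := ⟨o :: t.1.1, isSAWFrom_top_iff.mpr ⟨rfl, List.nodup_cons.mpr ⟨t.2, t.1.2.1⟩⟩,
    by simp [t.1.2.2]⟩
  left_inv l := Subtype.ext (List.eq_cons_of_mem_head? l.2.1.1).symm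
  right_inv _ := rfl

def sawTopEquiv (o : α) (k : ℕ) :
    {l : List α // IsSAWFrom ⊤ o l ∧ l.length = k + 1} ≃ (Fin k ↪ ({o}ᶜ : Set α)) :=
  (sawTopEquivTail o k).trans <|
    ((nodupListEquivEmbedding α k).subtypeEquiv fun t => by
      simp [← mem_range_nodupListEquivEmbedding]).trans (Equiv.codRestrict _ _)

lemma mem_range_sawTopEquiv {o : α} {k : ℕ}
    (l : {l : List α // IsSAWFrom ⊤ o l ∧ l.length = k + 1}) (v : ({o}ᶜ : Set α)) :
    v ∈ Set.range (sawTopEquiv o k l) ↔ (v : α) ∈ l.1 :=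
  calc v ∈ Set.range (sawTopEquiv o k l)
      ↔ (v : α) ∈ Set.range (nodupListEquivEmbedding α k (sawTopEquivTail o k l).1) :=
        ⟨fun ⟨i, hi⟩ => ⟨i, congrArg Subtype.val hi⟩, fun ⟨i, hi⟩ => ⟨i, Subtype.ext hi⟩⟩
    _ ↔ (v : α) ∈ l.1.tail := mem_range_nodupListEquivEmbedding _ _
    _ ↔ (v : α) ∈ o :: l.1.tail := by rw [List.mem_cons]; exact (or_iff_right v.2).symm
    _ ↔ (v : α) ∈ l.1 := by rw [← List.eq_cons_of_mem_head? l.2.1.1]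

lemma sawCount_top [Fintype α] (o : α) (k : ℕ) :
    sawCount ⊤ o k = (Fintype.card α - 1).descFactorial k := by
  classical
  rw [sawCount, Nat.card_congr (sawTopEquiv o k), Nat.card_eq_fintype_card,
    Fintype.card_embedding_eq, Fintype.card_fin, Fintype.card_compl_set]
  simp

lemma inter_eq_singleton_iff_disjoint_range_sawTopEquiv {o : α} {k j : ℕ}
    (l₁ : {l : List α // IsSAWFrom ⊤ o l ∧ l.length = k + 1})
    (l₂ : {l : List α // IsSAWFrom ⊤ o l ∧ l.length = j + 1}) :
    {v | v ∈ l₁.1 ∧ v ∈ l₂.1} = {o} ↔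
      Disjoint (Set.range (sawTopEquiv o k l₁)) (Set.range (sawTopEquiv o j l₂)) := by
  simp only [Set.eq_singleton_iff_unique_mem, Set.disjoint_left, Set.mem_ofPred_eq,
    mem_range_sawTopEquiv, Subtype.forall, Set.mem_compl_singleton_iff]
  refine ⟨fun h v hvo h₁ h₂ => hvo (h.2 v ⟨h₁, h₂⟩),
    fun h => ⟨⟨l₁.2.1.head_mem, l₂.2.1.head_mem⟩, fun v hv => ?_⟩⟩
  by_contra hvo
  exact h v hvo hv.1 hv.2

def sawPairTopEquiv (o : α) (k j : ℕ) :
    {p : List α × List α //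
      (IsSAWFrom ⊤ o p.1 ∧ p.1.length = k + 1) ∧
      (IsSAWFrom ⊤ o p.2 ∧ p.2.length = j + 1) ∧
      {v | v ∈ p.1 ∧ v ∈ p.2} = {o}} ≃ (Fin k ⊕ Fin j ↪ ({o}ᶜ : Set α)) :=
  calc _ ≃ {q : {l : List α // IsSAWFrom ⊤ o l ∧ l.length = k + 1} ×
        {l : List α // IsSAWFrom ⊤ o l ∧ l.length = j + 1} //
          {v | v ∈ q.1.1 ∧ v ∈ q.2.1} = {o}} :=
        { toFun p := ⟨(⟨p.1.1, p.2.1⟩, ⟨p.1.2, p.2.2.1⟩), p.2.2.2⟩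
          invFun q := ⟨(q.1.1.1, q.1.2.1), q.1.1.2, q.1.2.2, q.2⟩ }
    _ ≃ {f : (Fin k ↪ ({o}ᶜ : Set α)) × (Fin j ↪ ({o}ᶜ : Set α)) //
          Disjoint (Set.range f.1) (Set.range f.2)} :=
        ((sawTopEquiv o k).prodCongr (sawTopEquiv o j)).subtypeEquiv fun q =>
          inter_eq_singleton_iff_disjoint_range_sawTopEquiv q.1 q.2
    _ ≃ _ := Equiv.sumEmbeddingEquivProdEmbeddingDisjoint.symm

lemma sawPairCount_top [Fintype α] (o : α) (k j : ℕ) :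
    sawPairCount ⊤ o k j = (Fintype.card α - 1).descFactorial (k + j) := by
  classical
  rw [sawPairCount, Nat.card_congr (sawPairTopEquiv o k j), Nat.card_eq_fintype_card,
    Fintype.card_embedding_eq, Fintype.card_sum, Fintype.card_fin, Fintype.card_fin,
    Fintype.card_compl_set]
  simp

end CompleteGraphCounting

lemma completeZ_eq_tsum {n : ℕ} (hn : 0 < n) (y : ℝ) :
    completeZ n y = ∑' k : ℕ, ((n - 1).descFactorial k : ℝ) * y ^ k := by
  rw [completeZ, dif_pos hn, sawZ, Fintype.card_fin, tsum_eq_sum (s := Finset.range n)]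
  · simp only [sawCount_top, Fintype.card_fin]
  · intro k hk
    rw [Finset.mem_range, not_lt] at hk
    simp [Nat.descFactorial_eq_zero_iff_lt.mpr (by omega : n - 1 < k)]

lemma completeL_eq_tsum {n : ℕ} (hn : 0 < n) (y : ℝ) :
    completeL n y = (completeZ n y)⁻¹ *
      ∑' k : ℕ, (k : ℝ) * (((n - 1).descFactorial k : ℝ) * y ^ k) := by
  rw [completeL, dif_pos hn, sawL, completeZ, dif_pos hn, Fintype.card_fin,
    tsum_eq_sum (s := Finset.range n)]
  · simp only [sawCount_top, Fintype.card_fin, mul_assoc]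
  · intro k hk
    rw [Finset.mem_range, not_lt] at hk
    simp [Nat.descFactorial_eq_zero_iff_lt.mpr (by omega : n - 1 < k)]

lemma completeI_eq_tsum {n : ℕ} (hn : 0 < n) (y : ℝ) :
    completeI n y = (completeZ n y ^ 2)⁻¹ *
      ∑' p : ℕ × ℕ, ((n - 1).descFactorial (p.1 + p.2) : ℝ) * y ^ (p.1 + p.2) := by
  rw [completeI, dif_pos hn, sawI, completeZ, dif_pos hn, Fintype.card_fin,
    tsum_eq_sum (s := Finset.range n ×ˢ Finset.range n), Finset.sum_product]
  · simp only [sawPairCount_top, Fintype.card_fin]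
  · intro p hp
    rw [Finset.mem_product, Finset.mem_range, Finset.mem_range, not_and_or, not_lt, not_lt] at hp
    simp [Nat.descFactorial_eq_zero_iff_lt.mpr (by omega : n - 1 < p.1 + p.2)]

lemma summable_pow_add {K : Type*} [NormedField K] [CompleteSpace K] {r : K} (hr : ‖r‖ < 1) :
    Summable fun p : ℕ × ℕ => r ^ (p.1 + p.2) := by
  simpa only [pow_add] using summable_mul_of_summable_norm
    (summable_norm_geometric_of_norm_lt_one hr) (summable_norm_geometric_of_norm_lt_one hr)

lemma tsum_pow_add {K : Type*} [NormedField K] [CompleteSpace K] {r : K} (hr : ‖r‖ < 1) :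
    ∑' p : ℕ × ℕ, r ^ (p.1 + p.2) = (1 - r)⁻¹ ^ 2 := by
  simp only [pow_add]
  rw [← tsum_mul_tsum_of_summable_norm (summable_norm_geometric_of_norm_lt_one hr)
    (summable_norm_geometric_of_norm_lt_one hr), tsum_geometric_of_norm_lt_one hr, sq]

lemma abs_descFactorial_mul_pow_le {N n : ℕ} (hN : N ≤ n) (k : ℕ) (y : ℝ) :
    |(N.descFactorial k : ℝ) * y ^ k| ≤ |n * y| ^ k := by
  rw [abs_mul, abs_mul, abs_pow, mul_pow, Nat.abs_cast, Nat.abs_cast]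
  gcongr
  exact_mod_cast (Nat.descFactorial_le_pow N k).trans (Nat.pow_le_pow_left hN k)

section CompleteGraphLimits

variable {x : ℕ → ℝ} {a : ℝ}

lemma tendsto_zero_of_tendsto_natCast_mul
    (hx : Tendsto (fun n : ℕ => (n : ℝ) * x n) atTop (𝓝 a)) : Tendsto x atTop (𝓝 0) := by
  have h := hx.mul (tendsto_inv_atTop_zero.comp tendsto_natCast_atTop_atTop)
  rw [mul_zero] at h
  refine h.congr' ?_
  filter_upwards [eventually_ne_atTop 0] with n hn
  simp [mul_comm, hn]

lemma tendsto_descFactorial_mul_pow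
    (hx : Tendsto (fun n : ℕ => (n : ℝ) * x n) atTop (𝓝 a)) (m k : ℕ) :
    Tendsto (fun n : ℕ => ((n - m).descFactorial k : ℝ) * x n ^ k) atTop (𝓝 (a ^ k)) := by
  induction k with
  | zero => simp
  | succ k ih =>
    have hfactor : Tendsto (fun n : ℕ => (n : ℝ) * x n - (m + k) * x n) atTop (𝓝 a) := by
      simpa using hx.sub ((tendsto_zero_of_tendsto_natCast_mul hx).const_mul ((m : ℝ) + k))
    rw [pow_succ']
    refine (hfactor.mul ih).congr' ?_
    filter_upwards [eventually_ge_atTop (m + k)] with n hn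
    rw [Nat.descFactorial_succ, Nat.cast_mul, Nat.cast_sub (by omega), Nat.cast_sub (by omega)]
    ring

lemma tendsto_tsum_descFactorial_mul_pow {ι : Type*} {g : ι → ℕ} {h : ι → ℝ}
    (hs : ∀ c : ℝ, 0 ≤ c → c < 1 → Summable fun i => |h i| * c ^ g i)
    (hx : Tendsto (fun n : ℕ => (n : ℝ) * x n) atTop (𝓝 a)) (ha : |a| < 1) :
    Tendsto (fun n : ℕ => ∑' i, h i * (((n - 1).descFactorial (g i) : ℝ) * x n ^ g i)) atTop
      (𝓝 (∑' i, h i * a ^ g i)) := by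
  obtain ⟨c, hac, hc1⟩ := exists_between ha
  refine tendsto_tsum_of_dominated_convergence (hs c ((abs_nonneg a).trans hac.le) hc1)
    (fun i => (tendsto_descFactorial_mul_pow hx 1 (g i)).const_mul (h i)) ?_
  filter_upwards [hx.abs.eventually_le_const hac] with n hn i
  rw [Real.norm_eq_abs, abs_mul]
  gcongr
  exact (abs_descFactorial_mul_pow_le (Nat.sub_le n 1) _ _).trans
    (pow_le_pow_left₀ (abs_nonneg _) hn _)

lemma tendsto_completeZ (hx : Tendsto (fun n : ℕ => (n : ℝ) * x n) atTop (𝓝 a)) (ha : |a| < 1) :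
    Tendsto (fun n => completeZ n (x n)) atTop (𝓝 (1 - a)⁻¹) := by
  have h := tendsto_tsum_descFactorial_mul_pow (g := id) (h := fun _ => 1)
    (fun c hc0 hc1 => by simpa using summable_geometric_of_lt_one hc0 hc1) hx ha
  simp only [id, one_mul, tsum_geometric_of_norm_lt_one (Real.norm_eq_abs a ▸ ha)] at h
  refine h.congr' ?_
  filter_upwards [eventually_gt_atTop 0] with n hn
  rw [completeZ_eq_tsum hn]

lemma tendsto_completeL (hx : Tendsto (fun n : ℕ => (n : ℝ) * x n) atTop (𝓝 a)) (ha : |a| < 1) :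
    Tendsto (fun n => completeL n (x n)) atTop (𝓝 (a / (1 - a))) := by
  have hnum := tendsto_tsum_descFactorial_mul_pow (g := id) (h := fun k => (k : ℝ))
    (fun c hc0 hc1 => by
      simpa using summable_pow_mul_geometric_of_norm_lt_one 1 (r := c)
        (by rwa [Real.norm_of_nonneg hc0])) hx ha
  simp only [id, tsum_coe_mul_geometric_of_norm_lt_one (Real.norm_eq_abs a ▸ ha)] at hnum
  have h1a : 1 - a ≠ 0 := by linarith [le_abs_self a]
  have h := ((tendsto_completeZ hx ha).inv₀ (inv_ne_zero h1a)).mul hnum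
  rw [inv_inv, ← mul_div_assoc, pow_two, mul_div_mul_left _ _ h1a] at h
  refine h.congr' ?_
  filter_upwards [eventually_gt_atTop 0] with n hn
  rw [completeL_eq_tsum hn]

lemma tendsto_completeI (hx : Tendsto (fun n : ℕ => (n : ℝ) * x n) atTop (𝓝 a)) (ha : |a| < 1) :
    Tendsto (fun n => completeI n (x n)) atTop (𝓝 1) := by
  have hnum := tendsto_tsum_descFactorial_mul_pow (g := fun p : ℕ × ℕ => p.1 + p.2)
    (h := fun _ => 1) (fun c hc0 hc1 => by
      simpa using summable_pow_add (by rwa [Real.norm_of_nonneg hc0] : ‖c‖ < 1)) hx ha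
  simp only [one_mul, tsum_pow_add (Real.norm_eq_abs a ▸ ha)] at hnum
  have h1a : (1 - a)⁻¹ ^ 2 ≠ 0 := by
    have : 1 - a ≠ 0 := by linarith [le_abs_self a]
    positivity
  have h := (((tendsto_completeZ hx ha).pow 2).inv₀ h1a).mul hnum
  rw [inv_mul_cancel₀ h1a] at h
  refine h.congr' ?_
  filter_upwards [eventually_gt_atTop 0] with n hn
  rw [completeI_eq_tsum hn]

end CompleteGraphLimits

theorem complete_subCritical_length_and_intersection_general (ε : ℝ) (hε0 : 0 < ε) (hε1 : ε < 1)
    (x : ℕ → ℝ)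
    (hlim : Tendsto (fun n : ℕ => (n : ℝ) * x n) atTop (𝓝 (1 - ε))) :
    Tendsto (fun n : ℕ => completeL n (x n)) atTop (𝓝 ((1 - ε) / ε)) ∧
    Tendsto (fun n : ℕ => completeI n (x n)) atTop (𝓝 1) := by
  have ha : |1 - ε| < 1 := abs_lt.mpr ⟨by linarith, by linarith⟩
  refine ⟨?_, tendsto_completeI hlim ha⟩
  simpa only [sub_sub_cancel] using tendsto_completeL hlim ha

/-- If `0 < ε < 1` and `n · x_n → 1 − ε`, then for the complete graphs
`K_n`, `L(x_n, K_n) → (1−ε)/ε` and `I(x_n, K_n) → 1`. -/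
theorem complete_subCritical_length_and_intersection (ε : ℝ) (hε0 : 0 < ε) (hε1 : ε < 1)
    (x : ℕ → ℝ) (hx : ∀ n, 0 < x n)
    (hlim : Tendsto (fun n : ℕ => (n : ℝ) * x n) atTop (𝓝 (1 - ε))) :
    Tendsto (fun n : ℕ => completeL n (x n)) atTop (𝓝 ((1 - ε) / ε)) ∧
    Tendsto (fun n : ℕ => completeI n (x n)) atTop (𝓝 1) :=
  complete_subCritical_length_and_intersection_general ε hε0 hε1 x hlim
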